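/- arXiv:1904.09251 — 6 statements merged into one kernel-verified Lean document; each statement's English description precedes it below -/
import Mathlib

section
/- (Log-linear property of the error for SO(3).) Let ω : ℝ → ℝ³ and let R : ℝ → Matrix (Fin 3) (Fin 3) ℝ be differentiable with d/dt R t = (R t) * (ω t)^∧ for all t, and assume (R t)ᵀ (R t) = I and det (R t) = 1 for all t. Fix ξ₀ ∈ ℝ³ and define ξ t := (R t)ᵀ ξ₀ and E t := exp_m((ξ t)^∧). Then for all t: (i) d/dt ξ t = −(ω t)^∧ (ξ t), i.e., ξ solves a linear time-varying differential equation; (ii) E t = (R t)ᵀ * exp_m(ξ₀^∧) * (R t); and (iii) d/dt E t = (E t) * (ω t)^∧ − (ω t)^∧ * (E t), so the nonlinear left-invariant error with initial value exp_m(ξ₀^∧) is exactly recovered as the exponential of the solution of the linear equation. -/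
/-!
The hat map is equivariant under rotations: for `A ∈ SO(3)`, `(Aᵀ v)^∧ = Aᵀ v^∧ A`. Hence
`exp_m((Rᵀ ξ₀)^∧)` is the conjugate `Rᵀ exp_m(ξ₀^∧) R`, and both differential equations follow
from the product rule together with `d/dt Rᵀ = (R ω^∧)ᵀ = -ω^∧ Rᵀ`.
-/

open Matrix

/-- The skew-symmetric (hat) matrix of a vector `φ ∈ ℝ³`, so that `skew φ *ᵥ x = φ × x`. -/
noncomputable def skew (φ : Fin 3 → ℝ) : Matrix (Fin 3) (Fin 3) ℝ :=
  !![0, -φ 2, φ 1; φ 2, 0, -φ 0; -φ 1, φ 0, 0]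

theorem skew_transpose (φ : Fin 3 → ℝ) : (skew φ)ᵀ = -skew φ := by
  ext i j; fin_cases i <;> fin_cases j <;> simp [skew]

theorem adjugate_eq_transpose_of_orthogonal_of_det_eq_one {n α : Type*} [Fintype n]
    [DecidableEq n] [CommRing α] {A : Matrix n n α} (hA : Aᵀ * A = 1) (hdet : A.det = 1) :
    adjugate A = Aᵀ := by
  rw [← inv_eq_left_inv hA, inv_def, hdet, Ring.inverse_one, one_smul]

theorem skew_transpose_mulVec {A : Matrix (Fin 3) (Fin 3) ℝ} (hA : Aᵀ * A = 1)
    (hdet : A.det = 1) (v : Fin 3 → ℝ) : skew (Aᵀ *ᵥ v) = Aᵀ * skew v * A := by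
  have hadj := adjugate_eq_transpose_of_orthogonal_of_det_eq_one hA hdet
  rw [adjugate_fin_three, ← Matrix.ext_iff] at hadj
  simp only [Fin.isValue, of_apply, cons_val', cons_val_fin_one, transpose_apply,
    Fin.forall_fin_succ, cons_val_zero, cons_val_succ, Fin.succ_zero_eq_one, Fin.succ_one_eq_two,
    IsEmpty.forall_iff, and_true] at hadj
  obtain ⟨⟨h00, h01, h02⟩, ⟨h10, h11, h12⟩, ⟨h20, h21, h22⟩⟩ := hadj
  -- The entries of `Aᵀ * skew v * A` are triple products of `v` with two columns of `A`; for a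
  -- rotation the cross product of two columns is ± the third, which is what `adj A = Aᵀ` says.
  ext i j
  fin_cases i <;> fin_cases j <;>
    simp [skew, mul_apply, mulVec, dotProduct, Fin.sum_univ_three] <;> grind

theorem exp_skew_transpose_mulVec {A : Matrix (Fin 3) (Fin 3) ℝ} (hA : Aᵀ * A = 1)
    (hdet : A.det = 1) (v : Fin 3 → ℝ) :
    NormedSpace.exp (skew (Aᵀ *ᵥ v)) = Aᵀ * NormedSpace.exp (skew v) * A := by
  have hunit : IsUnit A := (isUnit_iff_isUnit_det A).2 (isUnit_det_of_left_inverse hA)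
  rw [skew_transpose_mulVec hA hdet, ← inv_eq_left_inv hA, exp_conj' _ _ hunit]

section EntrywiseDeriv

variable {m n p : Type*} {t : ℝ}

theorem hasDerivAt_mul_apply [Fintype n] {A : ℝ → Matrix m n ℝ} {B : ℝ → Matrix n p ℝ}
    {A' : Matrix m n ℝ} {B' : Matrix n p ℝ}
    (hA : ∀ i j, HasDerivAt (fun s => A s i j) (A' i j) t)
    (hB : ∀ i j, HasDerivAt (fun s => B s i j) (B' i j) t) (i : m) (j : p) :
    HasDerivAt (fun s => (A s * B s) i j) ((A' * B t + A t * B') i j) t := by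
  simp only [mul_apply, Matrix.add_apply]
  rw [← Finset.sum_add_distrib]
  exact HasDerivAt.fun_sum fun k _ => (hA i k).mul (hB k j)

theorem hasDerivAt_mulVec_apply [Fintype n] {A : ℝ → Matrix m n ℝ} {A' : Matrix m n ℝ}
    (hA : ∀ i j, HasDerivAt (fun s => A s i j) (A' i j) t) (v : n → ℝ) (i : m) :
    HasDerivAt (fun s => (A s *ᵥ v) i) ((A' *ᵥ v) i) t :=
  HasDerivAt.fun_sum fun j _ => (hA i j).mul_const (v j)

end EntrywiseDeriv

/-- **Log-linear property of the error for SO(3).**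
If `Ṙ = R ω̂` with `R t ∈ SO(3)`, and `ξ t := (R t)ᵀ ξ₀`, `E t := exp_m((ξ t)^∧)`, then:
(i) `ξ` solves the linear time-varying ODE `d/dt ξ t = -(ω t)^∧ ξ t`;
(ii) `E t = (R t)ᵀ * exp_m(ξ₀^∧) * (R t)`;
(iii) `E` solves the nonlinear left-invariant error equation
`d/dt E t = E t * (ω t)^∧ - (ω t)^∧ * E t`. -/
theorem so3_log_linear_error
    (ω : ℝ → Fin 3 → ℝ) (R : ℝ → Matrix (Fin 3) (Fin 3) ℝ)
    (hR : ∀ (t : ℝ) (i j : Fin 3), HasDerivAt (fun s => R s i j) ((R t * skew (ω t)) i j) t)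
    (hSO : ∀ t : ℝ, (R t)ᵀ * R t = 1 ∧ (R t).det = 1)
    (ξ₀ : Fin 3 → ℝ)
    (ξ : ℝ → Fin 3 → ℝ) (hξ : ξ = fun t => (R t)ᵀ *ᵥ ξ₀)
    (E : ℝ → Matrix (Fin 3) (Fin 3) ℝ) (hE : E = fun t => NormedSpace.exp (skew (ξ t))) :
    (∀ (t : ℝ) (i : Fin 3),
        HasDerivAt (fun s => ξ s i) ((-(skew (ω t)) *ᵥ ξ t) i) t) ∧
    (∀ t : ℝ, E t = (R t)ᵀ * NormedSpace.exp (skew ξ₀) * R t) ∧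
    (∀ (t : ℝ) (i j : Fin 3),
        HasDerivAt (fun s => E s i j)
          ((E t * skew (ω t) - skew (ω t) * E t) i j) t) := by
  subst hξ hE
  have hexp : ∀ t,
      NormedSpace.exp (skew ((R t)ᵀ *ᵥ ξ₀)) = (R t)ᵀ * NormedSpace.exp (skew ξ₀) * R t :=
    fun t => exp_skew_transpose_mulVec (hSO t).1 (hSO t).2 ξ₀
  have hRtr : ∀ t i j, HasDerivAt (fun s => (R s)ᵀ i j) ((R t * skew (ω t))ᵀ i j) t :=
    fun t i j => hR t j i
  have hRtr_eq : ∀ t, (R t * skew (ω t))ᵀ = -skew (ω t) * (R t)ᵀ := fun t => by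
    rw [transpose_mul, skew_transpose, neg_mul]
  refine ⟨fun t i => ?_, hexp, fun t i j => ?_⟩
  · simpa [hRtr_eq, mulVec_mulVec] using hasDerivAt_mulVec_apply (hRtr t) ξ₀ i
  · set C := NormedSpace.exp (skew ξ₀)
    have hC : ∀ i j, HasDerivAt (fun _ => C i j) ((0 : Matrix (Fin 3) (Fin 3) ℝ) i j) t :=
      fun i j => hasDerivAt_const t _
    have hderiv := hasDerivAt_mul_apply (hasDerivAt_mul_apply (hRtr t) hC) (hR t) i j
    have hcomm : (R t)ᵀ * C * R t * skew (ω t) - skew (ω t) * ((R t)ᵀ * C * R t) =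
        ((R t * skew (ω t))ᵀ * C + (R t)ᵀ * 0) * R t + (R t)ᵀ * C * (R t * skew (ω t)) := by
      rw [hRtr_eq]; noncomm_ring
    simpa only [hexp, hcomm] using hderiv
end

section
/- (Group-affine property of the contact-inertial dynamics.) Fix ω, a, g ∈ ℝ³. For all 3×3 real matrices R₁, R₂ and all vectors v₁,p₁,d₁,v₂,p₂,d₂ ∈ ℝ³, letting X₁ := S(R₁,v₁,p₁,d₁) and X₂ := S(R₂,v₂,p₂,d₂), the deterministic contact-inertial dynamics F satisfies F(X₁ * X₂) = F(X₁) * X₂ + X₁ * F(X₂) − X₁ * F(I₆) * X₂, where I₆ is the 6×6 identity matrix (note X₁ * X₂ again has the form S(R,v,p,d)). -/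
open Matrix

/-- `S R v p d` is the 6×6 matrix with top-left 3×3 block `R`, whose 4th, 5th, 6th columns
have top three entries `v`, `p`, `d` respectively, bottom-right 3×3 block the identity, and
all remaining entries zero (an element of `SE₃(3)`). -/
noncomputable def S (R : Matrix (Fin 3) (Fin 3) ℝ) (v p d : Fin 3 → ℝ) :
    Matrix (Fin 6) (Fin 6) ℝ := fun i j =>
  if hi : (i : ℕ) < 3 then
    if hj : (j : ℕ) < 3 then R ⟨i, hi⟩ ⟨j, hj⟩
    else if (j : ℕ) = 3 then v ⟨i, hi⟩
    else if (j : ℕ) = 4 then p ⟨i, hi⟩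
    else d ⟨i, hi⟩
  else if (i : ℕ) = (j : ℕ) then 1 else 0

/-- `T M x y z` is the 6×6 matrix whose top three rows consist of the blocks
`(M, x, y, z)` and whose bottom three rows are zero. -/
noncomputable def T (M : Matrix (Fin 3) (Fin 3) ℝ) (x y z : Fin 3 → ℝ) :
    Matrix (Fin 6) (Fin 6) ℝ := fun i j =>
  if hi : (i : ℕ) < 3 then
    if hj : (j : ℕ) < 3 then M ⟨i, hi⟩ ⟨j, hj⟩
    else if (j : ℕ) = 3 then x ⟨i, hi⟩
    else if (j : ℕ) = 4 then y ⟨i, hi⟩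
    else z ⟨i, hi⟩
  else 0

/-- The top-left 3×3 block of a 6×6 matrix. -/
noncomputable def Rblk (X : Matrix (Fin 6) (Fin 6) ℝ) : Matrix (Fin 3) (Fin 3) ℝ :=
  fun i j => X (Fin.castLE (by norm_num) i) (Fin.castLE (by norm_num) j)

/-- The top three entries of the 4th column of a 6×6 matrix (the `v` block). -/
noncomputable def vblk (X : Matrix (Fin 6) (Fin 6) ℝ) : Fin 3 → ℝ :=
  fun i => X (Fin.castLE (by norm_num) i) (3 : Fin 6)

/-- The deterministic contact-inertial dynamics: on a state `S R v p d` it returns the 6×6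
matrix whose top three rows consist of the blocks `(R ω̂, R a + g, v, 0)` and whose bottom
three rows are zero. -/
noncomputable def F (ω a g : Fin 3 → ℝ) (X : Matrix (Fin 6) (Fin 6) ℝ) :
    Matrix (Fin 6) (Fin 6) ℝ :=
  T (Rblk X * skew ω) (Rblk X *ᵥ a + g) (vblk X) 0


set_option maxHeartbeats 1000000 in
lemma S_mul_S (R₁ R₂ : Matrix (Fin 3) (Fin 3) ℝ) (v₁ p₁ d₁ v₂ p₂ d₂ : Fin 3 → ℝ) :
    S R₁ v₁ p₁ d₁ * S R₂ v₂ p₂ d₂ =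
      S (R₁ * R₂) (R₁ *ᵥ v₂ + v₁) (R₁ *ᵥ p₂ + p₁) (R₁ *ᵥ d₂ + d₁) := by
  ext i j
  fin_cases i <;> fin_cases j <;>
    simp [S, Matrix.mul_apply, Fin.sum_univ_six, Fin.sum_univ_three,
      Matrix.mulVec, dotProduct, show ((3:Fin 6):ℕ)=3 from rfl,
      show ((4:Fin 6):ℕ)=4 from rfl, show ((5:Fin 6):ℕ)=5 from rfl]

set_option maxHeartbeats 1000000 in
lemma T_mul_S (M : Matrix (Fin 3) (Fin 3) ℝ) (x y z : Fin 3 → ℝ)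
    (R : Matrix (Fin 3) (Fin 3) ℝ) (v p d : Fin 3 → ℝ) :
    T M x y z * S R v p d = T (M * R) (M *ᵥ v + x) (M *ᵥ p + y) (M *ᵥ d + z) := by
  ext i j
  fin_cases i <;> fin_cases j <;>
    simp [S, T, Matrix.mul_apply, Fin.sum_univ_six, Fin.sum_univ_three,
      Matrix.mulVec, dotProduct, show ((3:Fin 6):ℕ)=3 from rfl,
      show ((4:Fin 6):ℕ)=4 from rfl, show ((5:Fin 6):ℕ)=5 from rfl]

set_option maxHeartbeats 1000000 in
lemma S_mul_T (R : Matrix (Fin 3) (Fin 3) ℝ) (v p d : Fin 3 → ℝ)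
    (M : Matrix (Fin 3) (Fin 3) ℝ) (x y z : Fin 3 → ℝ) :
    S R v p d * T M x y z = T (R * M) (R *ᵥ x) (R *ᵥ y) (R *ᵥ z) := by
  ext i j
  fin_cases i <;> fin_cases j <;>
    simp [S, T, Matrix.mul_apply, Fin.sum_univ_six, Fin.sum_univ_three,
      Matrix.mulVec, dotProduct, show ((3:Fin 6):ℕ)=3 from rfl,
      show ((4:Fin 6):ℕ)=4 from rfl, show ((5:Fin 6):ℕ)=5 from rfl]

lemma T_add (M M' : Matrix (Fin 3) (Fin 3) ℝ) (x y z x' y' z' : Fin 3 → ℝ) :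
    T M x y z + T M' x' y' z' = T (M + M') (x + x') (y + y') (z + z') := by
  ext i j
  by_cases hi : (i : ℕ) < 3 <;> simp [T, hi] <;> split_ifs <;> simp

lemma T_sub (M M' : Matrix (Fin 3) (Fin 3) ℝ) (x y z x' y' z' : Fin 3 → ℝ) :
    T M x y z - T M' x' y' z' = T (M - M') (x - x') (y - y') (z - z') := by
  ext i j
  by_cases hi : (i : ℕ) < 3 <;> simp [T, hi] <;> split_ifs <;> simp

lemma Rblk_S (R : Matrix (Fin 3) (Fin 3) ℝ) (v p d : Fin 3 → ℝ) :
    Rblk (S R v p d) = R := by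
  ext i j; fin_cases i <;> fin_cases j <;>
    simp [Rblk, S, Fin.ext_iff]

lemma vblk_S (R : Matrix (Fin 3) (Fin 3) ℝ) (v p d : Fin 3 → ℝ) :
    vblk (S R v p d) = v := by
  ext i; fin_cases i <;>
    simp [vblk, S, Fin.ext_iff, show ((3:Fin 6):ℕ)=3 from rfl]

lemma Rblk_one : Rblk (1 : Matrix (Fin 6) (Fin 6) ℝ) = 1 := by
  ext i j; fin_cases i <;> fin_cases j <;>
    simp [Rblk, Matrix.one_apply, Fin.ext_iff]

lemma vblk_one : vblk (1 : Matrix (Fin 6) (Fin 6) ℝ) = 0 := by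
  ext i; fin_cases i <;>
    simp [vblk, Matrix.one_apply, Fin.ext_iff, show ((3:Fin 6):ℕ)=3 from rfl]

/-- **Group-affine property of the contact-inertial dynamics.** -/
theorem contact_inertial_dynamics_group_affine
    (ω a g : Fin 3 → ℝ)
    (R₁ R₂ : Matrix (Fin 3) (Fin 3) ℝ) (v₁ p₁ d₁ v₂ p₂ d₂ : Fin 3 → ℝ) :
    F ω a g (S R₁ v₁ p₁ d₁ * S R₂ v₂ p₂ d₂) =
      F ω a g (S R₁ v₁ p₁ d₁) * S R₂ v₂ p₂ d₂ +
        S R₁ v₁ p₁ d₁ * F ω a g (S R₂ v₂ p₂ d₂) -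
        S R₁ v₁ p₁ d₁ * F ω a g 1 * S R₂ v₂ p₂ d₂ := by
  rw [S_mul_S]
  simp only [F, Rblk_S, vblk_S, Rblk_one, vblk_one]
  rw [T_mul_S, S_mul_T, S_mul_T, T_mul_S, T_add, T_sub]
  have h1 : R₁ * skew ω * R₂ + R₁ * (R₂ * skew ω) - R₁ * (1 * skew ω) * R₂ =
      R₁ * R₂ * skew ω := by noncomm_ring
  have h2 : (R₁ * skew ω) *ᵥ v₂ + (R₁ *ᵥ a + g) + R₁ *ᵥ (R₂ *ᵥ a + g) -
      ((R₁ * (1 * skew ω)) *ᵥ v₂ + R₁ *ᵥ ((1 : Matrix (Fin 3) (Fin 3) ℝ) *ᵥ a + g)) =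
      (R₁ * R₂) *ᵥ a + g := by
    simp [Matrix.mulVec_add, Matrix.mulVec_mulVec, Matrix.one_mulVec]; abel
  have h3 : (R₁ * skew ω) *ᵥ p₂ + v₁ + R₁ *ᵥ v₂ -
      ((R₁ * (1 * skew ω)) *ᵥ p₂ + R₁ *ᵥ (0 : Fin 3 → ℝ)) = R₁ *ᵥ v₂ + v₁ := by
    simp; abel
  have h4 : (R₁ * skew ω) *ᵥ d₂ + 0 + R₁ *ᵥ (0 : Fin 3 → ℝ) -
      ((R₁ * (1 * skew ω)) *ᵥ d₂ + R₁ *ᵥ (0 : Fin 3 → ℝ)) = (0 : Fin 3 → ℝ) := by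
    simp
  rw [h1, h2, h3, h4]
end

section
/- (Unobservability of absolute position.) Fix g ∈ ℝ³. Let A be the 12×12 real matrix, written in 3×3 blocks indexed 1..4, whose only nonzero blocks are A₂₁ = ĝ and A₃₂ = I₃, and let H be the 3×12 matrix with blocks (0₃, 0₃, −I₃, I₃). Then for every t ∈ ℝ and every w ∈ ℝ³, H * exp_m(A t) * u = 0, where u ∈ ℝ¹² is the vector with block components (0, 0, w, w). Hence the direction of a common translation of the position and contact-point states lies in the kernel of every row block of the observability matrix. -/
open Matrix

/-- Assemble a 12×12 matrix from a 4×4 array of 3×3 blocks. -/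
noncomputable def B4 (M : Fin 4 → Fin 4 → Matrix (Fin 3) (Fin 3) ℝ) :
    Matrix (Fin 12) (Fin 12) ℝ := fun i j =>
  M ⟨(i : ℕ) / 3, by have := i.isLt; omega⟩ ⟨(j : ℕ) / 3, by have := j.isLt; omega⟩
    ⟨(i : ℕ) % 3, by omega⟩ ⟨(j : ℕ) % 3, by omega⟩

/-- The linearized right-invariant error dynamics matrix: the 12×12 block matrix whose only
nonzero blocks are `A₂₁ = ĝ` and `A₃₂ = I₃`. -/
noncomputable def A12 (g : Fin 3 → ℝ) : Matrix (Fin 12) (Fin 12) ℝ :=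
  B4 ![![0, 0, 0, 0], ![skew g, 0, 0, 0], ![0, 1, 0, 0], ![0, 0, 0, 0]]

/-- The forward-kinematics observation matrix: the 3×12 matrix with 3×3 blocks
`(0, 0, -I₃, I₃)`. -/
noncomputable def H312 : Matrix (Fin 3) (Fin 12) ℝ := fun i j =>
  (![0, 0, -1, 1] : Fin 4 → Matrix (Fin 3) (Fin 3) ℝ)
    ⟨(j : ℕ) / 3, by have := j.isLt; omega⟩ i ⟨(j : ℕ) % 3, by omega⟩

/-- Assemble a vector in `ℝ¹²` from four block components in `ℝ³`. -/
noncomputable def vec4 (x : Fin 4 → Fin 3 → ℝ) : Fin 12 → ℝ := fun j =>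
  x ⟨(j : ℕ) / 3, by have := j.isLt; omega⟩ ⟨(j : ℕ) % 3, by omega⟩

namespace Matrix

-- Any Banach-algebra norm will do: `NormedSpace.exp` itself does not depend on the norm.
attribute [local instance] Matrix.linftyOpNormedRing Matrix.linftyOpNormedAlgebra

theorem exp_mulVec_of_mulVec_eq_zero {m 𝕂 : Type*} [Fintype m] [DecidableEq m] [RCLike 𝕂]
    {M : Matrix m m 𝕂} {v : m → 𝕂} (h : M *ᵥ v = 0) : NormedSpace.exp M *ᵥ v = v := by
  have hterm : ∀ n, ((n.factorial⁻¹ : 𝕂) • M ^ n) *ᵥ v = if n = 0 then v else 0 := by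
    rintro (_ | n)
    · simp
    · rw [smul_mulVec, pow_succ, ← mulVec_mulVec, h]
      simp
  have hexp : HasSum (fun n => (n.factorial⁻¹ : 𝕂) • M ^ n) (NormedSpace.exp M) :=
    NormedSpace.exp_series_hasSum_exp' M
  have hsum : HasSum (fun n => ((n.factorial⁻¹ : 𝕂) • M ^ n) *ᵥ v) (NormedSpace.exp M *ᵥ v) :=
    hexp.map (mulVec.addMonoidHomLeft v) (continuous_id.matrix_mulVec continuous_const)
  simp only [hterm] at hsum
  exact hsum.unique (hasSum_ite_eq 0 v)

end Matrix

-- `(a, b) ↦ 3 * a + b`: the block/offset splitting of `Fin 12` used by `B4`, `H312` and `vec4`.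
def blockEquiv : Fin 4 × Fin 3 ≃ Fin 12 := finProdFinEquiv

theorem blockEquiv_div_three (a : Fin 4) (b : Fin 3) (h : (blockEquiv (a, b) : ℕ) / 3 < 4) :
    (⟨(blockEquiv (a, b) : ℕ) / 3, h⟩ : Fin 4) = a :=
  Fin.ext (by simp [blockEquiv, finProdFinEquiv]; omega)

theorem blockEquiv_mod_three (a : Fin 4) (b : Fin 3) (h : (blockEquiv (a, b) : ℕ) % 3 < 3) :
    (⟨(blockEquiv (a, b) : ℕ) % 3, h⟩ : Fin 3) = b :=
  Fin.ext (by simp [blockEquiv, finProdFinEquiv])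

theorem sum_fin_twelve_eq_sum_blocks {α : Type*} [AddCommMonoid α] (f : Fin 12 → α) :
    ∑ j, f j = ∑ a : Fin 4, ∑ b : Fin 3, f (blockEquiv (a, b)) := by
  rw [← Fintype.sum_prod_type', blockEquiv.sum_comp]

theorem vec4_blockEquiv (x : Fin 4 → Fin 3 → ℝ) (a : Fin 4) (b : Fin 3) :
    vec4 x (blockEquiv (a, b)) = x a b := by
  simp only [vec4, blockEquiv_div_three, blockEquiv_mod_three]

theorem vec4_zero : vec4 0 = 0 := rfl

theorem B4_blockEquiv (M : Fin 4 → Fin 4 → Matrix (Fin 3) (Fin 3) ℝ) (a c : Fin 4)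
    (b d : Fin 3) : B4 M (blockEquiv (a, b)) (blockEquiv (c, d)) = M a c b d := by
  simp only [B4, blockEquiv_div_three, blockEquiv_mod_three]

theorem B4_mulVec_vec4 (M : Fin 4 → Fin 4 → Matrix (Fin 3) (Fin 3) ℝ) (x : Fin 4 → Fin 3 → ℝ) :
    B4 M *ᵥ vec4 x = vec4 fun a => ∑ c, M a c *ᵥ x c := by
  ext i
  obtain ⟨⟨a, b⟩, rfl⟩ := blockEquiv.surjective i
  simp only [mulVec, dotProduct, sum_fin_twelve_eq_sum_blocks, vec4_blockEquiv,
    B4_blockEquiv, Finset.sum_apply]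

theorem H312_mulVec_vec4 (x : Fin 4 → Fin 3 → ℝ) : H312 *ᵥ vec4 x = x 3 - x 2 := by
  have hblocks : H312 *ᵥ vec4 x =
      ∑ c, (![0, 0, -1, 1] : Fin 4 → Matrix (Fin 3) (Fin 3) ℝ) c *ᵥ x c := by
    ext i
    simp only [mulVec, dotProduct, sum_fin_twelve_eq_sum_blocks, vec4_blockEquiv, H312,
      blockEquiv_div_three, blockEquiv_mod_three, Finset.sum_apply]
  rw [hblocks, Fin.sum_univ_four]
  simp only [Fin.isValue, cons_val, zero_mulVec, neg_mulVec, one_mulVec]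
  abel

theorem A12_mulVec_vec4_translation (g w : Fin 3 → ℝ) : A12 g *ᵥ vec4 ![0, 0, w, w] = 0 := by
  have hblocks : (fun a => ∑ c, ![![0, 0, 0, 0], ![skew g, 0, 0, 0], ![0, 1, 0, 0],
      ![0, 0, 0, 0]] a c *ᵥ ![0, 0, w, w] c) = 0 := by
    ext a : 1
    fin_cases a <;> simp [Fin.sum_univ_four]
  rw [A12, B4_mulVec_vec4, hblocks, vec4_zero]

/-- **Unobservability of absolute position.** A common translation `w` of the position and
contact-point states lies in the kernel of every row block `H exp_m(A t)` of the
observability matrix. -/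
theorem absolute_position_unobservable (g : Fin 3 → ℝ) (t : ℝ) (w : Fin 3 → ℝ) :
    H312 *ᵥ (NormedSpace.exp (t • A12 g) *ᵥ vec4 ![0, 0, w, w]) = 0 := by
  have hker : (t • A12 g) *ᵥ vec4 ![0, 0, w, w] = 0 := by
    rw [smul_mulVec, A12_mulVec_vec4_translation, smul_zero]
  rw [Matrix.exp_mulVec_of_mulVec_eq_zero hker, H312_mulVec_vec4]
  exact sub_self w
end

section
/- (Closed form of the exponential map of SE_K(3).) Fix K ∈ ℕ with K ≥ 1. For φ ∈ ℝ³ and ξ₁, …, ξ_K ∈ ℝ³, let Ĥ(φ, ξ₁,…,ξ_K) denote the (3+K)×(3+K) real matrix whose top-left 3×3 block is φ̂, whose (3+i)-th column has top three entries equal to ξᵢ for i = 1,…,K, and whose remaining entries are zero. Then exp_m(Ĥ(φ, ξ₁,…,ξ_K)) equals the (3+K)×(3+K) matrix whose top-left 3×3 block is Γ₀(φ) = exp_m(φ̂), whose (3+i)-th column has top three entries Γ₁(φ) ξᵢ for i = 1,…,K, whose bottom-right K×K block is the identity, and whose remaining entries are zero. -/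
open Matrix

/-- `Γₘ(φ) = Σ_{n=0}^∞ (1/(n+m)!) φ̂ⁿ`. -/
noncomputable def Gamma (m : ℕ) (φ : Fin 3 → ℝ) : Matrix (Fin 3) (Fin 3) ℝ :=
  ∑' n : ℕ, (((n + m).factorial : ℝ))⁻¹ • skew φ ^ n

/-- The Lie-algebra element `Ĥ(φ, ξ₁, …, ξ_K)` of `se_K(3)`: the `(3+K)×(3+K)` matrix with
top-left 3×3 block `φ̂`, whose `(3+i)`-th column has top three entries `ξᵢ`, and whose
remaining entries are zero. -/
noncomputable def seHat (K : ℕ) (φ : Fin 3 → ℝ) (ξ : Fin K → Fin 3 → ℝ) :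
    Matrix (Fin (3 + K)) (Fin (3 + K)) ℝ := fun i j =>
  if hi : (i : ℕ) < 3 then
    if hj : (j : ℕ) < 3 then skew φ ⟨i, hi⟩ ⟨j, hj⟩
    else ξ ⟨(j : ℕ) - 3, by have := j.isLt; omega⟩ ⟨i, hi⟩
  else 0

/-! After reordering `Fin (3 + K)` as `Fin 3 ⊕ Fin K`, `Ĥ` is the block matrix `[[φ̂, Ξ], [0, 0]]`
with `Ξ` the `3 × K` matrix of columns `ξᵢ`. Its powers are `Ĥ⁰ = 1` and
`Ĥⁿ⁺¹ = [[φ̂ⁿ⁺¹, φ̂ⁿ Ξ], [0, 0]]`, so summing the exponential series block by block gives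
`[[exp φ̂, Γ₁(φ) Ξ], [0, 1]]`. -/

open NormedSpace

theorem summable_inv_factorial_add_smul_pow {𝕂 𝔸 : Type*} [RCLike 𝕂] [NormedRing 𝔸]
    [NormedAlgebra 𝕂 𝔸] [CompleteSpace 𝔸] (a : 𝔸) (m : ℕ) :
    Summable fun n : ℕ => (((n + m).factorial : 𝕂))⁻¹ • a ^ n := by
  refine .of_norm_bounded (norm_expSeries_summable' (𝕂 := 𝕂) a) fun n => ?_
  simp only [norm_smul, norm_inv, RCLike.norm_natCast]
  gcongr
  exact Nat.le_add_right n m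

namespace Matrix

theorem summable_inv_factorial_add_smul_pow {𝕂 ι : Type*} [RCLike 𝕂] [Fintype ι]
    [DecidableEq ι] (A : Matrix ι ι 𝕂) (m : ℕ) :
    Summable fun n : ℕ => (((n + m).factorial : 𝕂))⁻¹ • A ^ n := by
  let _ : NormedRing (Matrix ι ι 𝕂) := Matrix.linftyOpNormedRing
  let _ : NormedAlgebra 𝕂 (Matrix ι ι 𝕂) := Matrix.linftyOpNormedAlgebra
  -- Instance search does not find completeness for the operator-norm uniformity chosen above.
  exact @_root_.summable_inv_factorial_add_smul_pow 𝕂 _ _ _ _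
    (FiniteDimensional.complete 𝕂 _) A m

theorem fromBlocks_zero_zero_pow_succ {R m k : Type*} [Semiring R] [Fintype m] [Fintype k]
    [DecidableEq m] [DecidableEq k] (A : Matrix m m R) (B : Matrix m k R) (n : ℕ) :
    fromBlocks A B (0 : Matrix k m R) 0 ^ (n + 1) = fromBlocks (A ^ (n + 1)) (A ^ n * B) 0 0 := by
  induction n with
  | zero => simp
  | succ n ih =>
    rw [_root_.pow_succ', ih, fromBlocks_multiply]
    simp [_root_.pow_succ', Matrix.mul_assoc]

end Matrix

section HasSum

variable {X R l m n o : Type*} [AddCommMonoid R] [TopologicalSpace R]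

theorem HasSum.matrix_fromBlocks {A : X → Matrix n l R} {B : X → Matrix n m R}
    {C : X → Matrix o l R} {D : X → Matrix o m R} {a : Matrix n l R} {b : Matrix n m R}
    {c : Matrix o l R} {d : Matrix o m R}
    (hA : HasSum A a) (hB : HasSum B b) (hC : HasSum C c) (hD : HasSum D d) :
    HasSum (fun x => Matrix.fromBlocks (A x) (B x) (C x) (D x)) (Matrix.fromBlocks a b c d) := by
  refine Pi.hasSum.2 fun i => Pi.hasSum.2 fun j => ?_
  rcases i with i | i <;> rcases j with j | j
  · exact Pi.hasSum.1 (Pi.hasSum.1 hA i) j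
  · exact Pi.hasSum.1 (Pi.hasSum.1 hB i) j
  · exact Pi.hasSum.1 (Pi.hasSum.1 hC i) j
  · exact Pi.hasSum.1 (Pi.hasSum.1 hD i) j

theorem HasSum.matrix_submatrix {f : X → Matrix m n R} {a : Matrix m n R} (hf : HasSum f a)
    (e₁ : l → m) (e₂ : o → n) :
    HasSum (fun x => (f x).submatrix e₁ e₂) (a.submatrix e₁ e₂) :=
  Pi.hasSum.2 fun i => Pi.hasSum.2 fun j => Pi.hasSum.1 (Pi.hasSum.1 hf (e₁ i)) (e₂ j)

end HasSum

namespace Matrix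

variable {𝕂 m k : Type*} [RCLike 𝕂] [Fintype m] [DecidableEq m] [Fintype k] [DecidableEq k]

theorem hasSum_exp (A : Matrix m m 𝕂) :
    HasSum (fun n : ℕ => ((n.factorial : 𝕂))⁻¹ • A ^ n) (exp A) := by
  rw [exp_eq_tsum 𝕂]
  simpa using (summable_inv_factorial_add_smul_pow A 0).hasSum

theorem exp_reindex {l : Type*} [Fintype l] [DecidableEq l] (e : m ≃ l) (A : Matrix m m 𝕂) :
    exp (reindex e e A) = reindex e e (exp A) := by
  have hpow (n : ℕ) : (A ^ n).submatrix e.symm e.symm = A.submatrix e.symm e.symm ^ n := by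
    simpa using map_pow (reindexAlgEquiv 𝕂 𝕂 e) A n
  rw [exp_eq_tsum 𝕂]
  refine HasSum.tsum_eq ?_
  simpa [hpow, submatrix_smul] using (hasSum_exp A).matrix_submatrix e.symm e.symm

theorem exp_fromBlocks_zero_zero (A : Matrix m m 𝕂) (B : Matrix m k 𝕂) :
    exp (fromBlocks A B 0 0) = fromBlocks (exp A)
      ((∑' n : ℕ, (((n + 1).factorial : 𝕂))⁻¹ • A ^ n) * B) 0 (1 : Matrix k k 𝕂) := by
  set Γ₁ := ∑' n : ℕ, (((n + 1).factorial : 𝕂))⁻¹ • A ^ n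
  have hterm (n : ℕ) :
      (((n + 1).factorial : 𝕂))⁻¹ • fromBlocks A B (0 : Matrix k m 𝕂) 0 ^ (n + 1) =
        fromBlocks ((((n + 1).factorial : 𝕂))⁻¹ • A ^ (n + 1))
          ((((n + 1).factorial : 𝕂))⁻¹ • A ^ n * B) 0 0 := by
    simp only [fromBlocks_zero_zero_pow_succ, fromBlocks_smul, Matrix.smul_mul, smul_zero]
  have hA : HasSum (fun n : ℕ => (((n + 1).factorial : 𝕂))⁻¹ • A ^ (n + 1)) (exp A - 1) := by
    simpa using (hasSum_nat_add_iff' 1).2 (hasSum_exp A)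
  have hB : HasSum (fun n : ℕ => (((n + 1).factorial : 𝕂))⁻¹ • A ^ n * B) (Γ₁ * B) :=
    (summable_inv_factorial_add_smul_pow A 1).hasSum.map
      (mulRightLinearMap m 𝕂 B) (continuous_id.matrix_mul continuous_const)
  have hsub_one : fromBlocks (exp A) (Γ₁ * B) 0 (1 : Matrix k k 𝕂) - 1 =
      fromBlocks (exp A - 1) (Γ₁ * B) 0 0 := by
    rw [← fromBlocks_one, sub_eq_add_neg, fromBlocks_neg, fromBlocks_add]
    simp [sub_eq_add_neg]
  rw [exp_eq_tsum 𝕂]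
  refine HasSum.tsum_eq ((hasSum_nat_add_iff' 1).1 ?_)
  simpa [hterm, hsub_one] using hA.matrix_fromBlocks hB hasSum_zero hasSum_zero

end Matrix

theorem seHat_eq_reindex_fromBlocks (K : ℕ) (φ : Fin 3 → ℝ) (ξ : Fin K → Fin 3 → ℝ) :
    seHat K φ ξ = reindex finSumFinEquiv finSumFinEquiv
      (fromBlocks (skew φ) (of fun a k => ξ k a) 0 0) := by
  ext i j
  refine Fin.addCases (fun a => ?_) (fun k => ?_) i <;>
    refine Fin.addCases (fun b => ?_) (fun l => ?_) j <;>
    simp [seHat]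

/-- **Closed form of the exponential map of `SE_K(3)`.**
`exp_m(Ĥ(φ, ξ₁,…,ξ_K))` has top-left block `Γ₀(φ) = exp_m(φ̂)`, `(3+i)`-th column with top
three entries `Γ₁(φ) ξᵢ`, bottom-right `K×K` identity block, and zeros elsewhere. -/
theorem se_K_exp_closed_form (K : ℕ)
    (φ : Fin 3 → ℝ) (ξ : Fin K → Fin 3 → ℝ) :
    NormedSpace.exp (seHat K φ ξ) = fun (i j : Fin (3 + K)) =>
      if hi : (i : ℕ) < 3 then
        if hj : (j : ℕ) < 3 then NormedSpace.exp (skew φ) ⟨i, hi⟩ ⟨j, hj⟩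
        else (Gamma 1 φ *ᵥ ξ ⟨(j : ℕ) - 3, by have := j.isLt; omega⟩) ⟨i, hi⟩
      else if (i : ℕ) = (j : ℕ) then 1 else 0 := by
  rw [seHat_eq_reindex_fromBlocks, exp_reindex, exp_fromBlocks_zero_zero]
  ext i j
  refine Fin.addCases (fun a => ?_) (fun k => ?_) i <;>
    refine Fin.addCases (fun b => ?_) (fun l => ?_) j <;>
    simp [Gamma, mulVec, dotProduct, mul_apply, one_apply, Fin.val_inj]
  omega
end

section
/- (Rodrigues' formula / closed form of Γ₀.) For every nonzero φ ∈ ℝ³, exp_m(φ̂) = I₃ + (sin‖φ‖ / ‖φ‖) φ̂ + ((1 − cos‖φ‖) / ‖φ‖²) φ̂², where ‖φ‖ is the Euclidean norm of φ. -/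
/-
If `S ^ 3 = -t² S` with `t ≠ 0`, then every odd power of `S` is a scalar multiple of `S` and
every even power `≥ 2` a scalar multiple of `S²`, the scalars being exactly the Taylor
coefficients of `sin t / t` and `(1 - cos t) / t²`. Splitting the exponential series into even
and odd parts thus gives `exp S = 1 + (sin t / t) S + ((1 - cos t) / t²) S²`. The hat matrix
satisfies this cubic relation with `t = ‖φ‖` (Cayley–Hamilton for `φ̂`).
-/

open Matrix

/-- The Euclidean norm of a vector in `ℝ³`. -/
noncomputable def enorm3 (φ : Fin 3 → ℝ) : ℝ :=
  Real.sqrt (∑ i, φ i ^ 2)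

section CubicRelation

open scoped Nat

variable {A : Type*} [Ring A] [Algebra ℝ A] {S : A} {t : ℝ}

theorem pow_two_mul_add_one_of_pow_three_eq (h : S ^ 3 = -(t ^ 2) • S) (n : ℕ) :
    S ^ (2 * n + 1) = (-(t ^ 2)) ^ n • S := by
  induction n with
  | zero => simp
  | succ n ih =>
    calc S ^ (2 * (n + 1) + 1) = S ^ (2 * n + 1) * S ^ 2 := by rw [← pow_add]; congr 1
      _ = (-(t ^ 2)) ^ n • S ^ 3 := by rw [ih, smul_mul_assoc, ← pow_succ']
      _ = (-(t ^ 2)) ^ (n + 1) • S := by rw [h, smul_smul, ← pow_succ]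

theorem pow_two_mul_add_two_of_pow_three_eq (h : S ^ 3 = -(t ^ 2) • S) (n : ℕ) :
    S ^ (2 * n + 2) = (-(t ^ 2)) ^ n • S ^ 2 := by
  rw [pow_succ, pow_two_mul_add_one_of_pow_three_eq h, smul_mul_assoc, ← sq]

variable [TopologicalSpace A] [ContinuousSMul ℝ A]

theorem hasSum_odd_exp_terms_of_pow_three_eq (ht : t ≠ 0) (h : S ^ 3 = -(t ^ 2) • S) :
    HasSum (fun k : ℕ => ((2 * k + 1)! : ℝ)⁻¹ • S ^ (2 * k + 1))
      ((Real.sin t / t) • S) := by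
  convert ((Real.hasSum_sin t).div_const t).smul_const S using 2 with k
  rw [pow_two_mul_add_one_of_pow_three_eq h, smul_smul, neg_pow]
  congr 1
  field_simp
  ring

theorem hasSum_even_exp_terms_of_pow_three_eq [IsTopologicalAddGroup A] (ht : t ≠ 0)
    (h : S ^ 3 = -(t ^ 2) • S) :
    HasSum (fun k : ℕ => ((2 * k)! : ℝ)⁻¹ • S ^ (2 * k))
      (((1 - Real.cos t) / t ^ 2) • S ^ 2 + 1) := by
  have one_sub_cos : HasSum (fun k : ℕ => -((-1) ^ (k + 1) * t ^ (2 * (k + 1)) / (2 * (k + 1))!))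
      (1 - Real.cos t) := by
    simpa using ((hasSum_nat_add_iff' (f := fun n : ℕ => (-1) ^ n * t ^ (2 * n) / (2 * n)!) 1).mpr
      (Real.hasSum_cos t)).neg
  have tail : HasSum (fun k : ℕ => ((2 * (k + 1))! : ℝ)⁻¹ • S ^ (2 * (k + 1)))
      (((1 - Real.cos t) / t ^ 2) • S ^ 2) := by
    convert (one_sub_cos.div_const (t ^ 2)).smul_const (S ^ 2) using 2 with k
    rw [mul_add_one, pow_two_mul_add_two_of_pow_three_eq h, smul_smul, neg_pow]
    congr 1
    field_simp
    ring
  simpa using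
    (hasSum_nat_add_iff (f := fun k : ℕ => ((2 * k)! : ℝ)⁻¹ • S ^ (2 * k)) 1).mp tail

variable [IsTopologicalRing A] [T2Space A]

theorem exp_eq_of_pow_three_eq_neg_sq_smul (ht : t ≠ 0) (h : S ^ 3 = -(t ^ 2) • S) :
    NormedSpace.exp S = 1 + (Real.sin t / t) • S + ((1 - Real.cos t) / t ^ 2) • S ^ 2 := by
  rw [NormedSpace.exp_eq_tsum ℝ]
  refine HasSum.tsum_eq ?_
  convert HasSum.even_add_odd (f := fun n : ℕ => (n ! : ℝ)⁻¹ • S ^ n)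
    (hasSum_even_exp_terms_of_pow_three_eq ht h)
    (hasSum_odd_exp_terms_of_pow_three_eq ht h) using 1
  abel

end CubicRelation

theorem sq_enorm3 (φ : Fin 3 → ℝ) : enorm3 φ ^ 2 = φ 0 ^ 2 + φ 1 ^ 2 + φ 2 ^ 2 := by
  rw [enorm3, Real.sq_sqrt (by positivity), Fin.sum_univ_three]

theorem enorm3_ne_zero {φ : Fin 3 → ℝ} (hφ : φ ≠ 0) : enorm3 φ ≠ 0 := by
  obtain ⟨i, hi⟩ := Function.ne_iff.mp hφ
  exact (Real.sqrt_pos.mpr <| Finset.sum_pos' (fun j _ => sq_nonneg (φ j))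
    ⟨i, Finset.mem_univ i, pow_two_pos_of_ne_zero hi⟩).ne'

theorem skew_pow_three (φ : Fin 3 → ℝ) : skew φ ^ 3 = -(enorm3 φ ^ 2) • skew φ := by
  rw [sq_enorm3, pow_succ, sq]
  ext i j
  fin_cases i <;> fin_cases j <;>
    simp [skew, Matrix.mul_apply, Fin.sum_univ_three] <;> ring

/-- **Rodrigues' formula** (closed form of `Γ₀`): for nonzero `φ ∈ ℝ³`,
`exp_m(φ̂) = I₃ + (sin‖φ‖/‖φ‖) φ̂ + ((1 − cos‖φ‖)/‖φ‖²) φ̂²`. -/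
theorem rodrigues_formula (φ : Fin 3 → ℝ) (hφ : φ ≠ 0) :
    NormedSpace.exp (skew φ) =
      1 + (Real.sin (enorm3 φ) / enorm3 φ) • skew φ
        + ((1 - Real.cos (enorm3 φ)) / enorm3 φ ^ 2) • skew φ ^ 2 :=
  exp_eq_of_pow_three_eq_neg_sq_smul (enorm3_ne_zero hφ) (skew_pow_three φ)
end

section
/- (Single integral of the SO(3) exponential.) For every ω ∈ ℝ³ and every Δ ∈ ℝ, the matrix-valued integral satisfies ∫₀^Δ exp_m((t ω)^∧) dt = Γ₁(Δ ω) · Δ, where the integral of a matrix-valued function is taken entrywise. -/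
open Matrix

/-!
Expanding `exp (t • a) = ∑ (tⁿ / n!) • aⁿ`, the series converges uniformly for `t` between `0`
and `Δ`, being dominated termwise by the exponential series of `|Δ| • a`. Integrating termwise,
`∫₀^Δ tⁿ / n! dt = Δ • Δⁿ / (n + 1)!`, which is the series of `Δ • Γ₁(Δ a)`. This holds in any
real Banach algebra; the entrywise matrix statement follows by applying the continuous linear
functional `A ↦ A i j`.
-/

open NormedSpace Nat intervalIntegral

section BanachAlgebra

variable {𝔸 : Type*} [NormedRing 𝔸] [NormedAlgebra ℝ 𝔸]

noncomputable def expSmulSeriesTerm (a : 𝔸) (n : ℕ) : C(ℝ, 𝔸) :=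
  ⟨fun t => (n !⁻¹ : ℝ) • (t • a) ^ n, by fun_prop⟩

lemma tsum_expSmulSeriesTerm (a : 𝔸) (t : ℝ) : ∑' n, expSmulSeriesTerm a n t = exp (t • a) := by
  rw [exp_eq_tsum ℝ]
  rfl

lemma norm_expSmulSeriesTerm_le {a : 𝔸} {t Δ : ℝ} (ht : |t| ≤ |Δ|) (n : ℕ) :
    ‖expSmulSeriesTerm a n t‖ ≤ ‖(n !⁻¹ : ℝ) • (|Δ| • a) ^ n‖ := by
  simp only [expSmulSeriesTerm, ContinuousMap.coe_mk, smul_pow, norm_smul, Real.norm_eq_abs,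
    abs_abs, norm_pow]
  gcongr

lemma summable_norm_restrict_expSmulSeriesTerm (a : 𝔸) (Δ : ℝ) :
    Summable fun n => ‖(expSmulSeriesTerm a n).restrict
      (⟨Set.uIcc 0 Δ, isCompact_uIcc⟩ : TopologicalSpace.Compacts ℝ)‖ :=
  (norm_expSeries_summable' (𝕂 := ℝ) (|Δ| • a)).of_nonneg_of_le (fun n => norm_nonneg _)
    fun n => (ContinuousMap.norm_le _ (norm_nonneg _)).2 fun ⟨t, ht⟩ =>
      norm_expSmulSeriesTerm_le (by simpa using Set.abs_sub_left_of_mem_uIcc ht) n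

lemma integral_expSmulSeriesTerm [CompleteSpace 𝔸] (a : 𝔸) (Δ : ℝ) (n : ℕ) :
    ∫ t in 0..Δ, expSmulSeriesTerm a n t = Δ • ((n + 1)! : ℝ)⁻¹ • (Δ • a) ^ n := by
  simp only [expSmulSeriesTerm, ContinuousMap.coe_mk, smul_pow, smul_smul]
  rw [intervalIntegral.integral_smul_const, integral_const_mul, integral_pow]
  congr 1
  push_cast [factorial_succ]
  field_simp
  ring

theorem integral_exp_smul [CompleteSpace 𝔸] (a : 𝔸) (Δ : ℝ) :
    ∫ t in 0..Δ, exp (t • a) = Δ • ∑' n : ℕ, ((n + 1)! : ℝ)⁻¹ • (Δ • a) ^ n := by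
  have h := hasSum_intervalIntegral_of_summable_norm (summable_norm_restrict_expSmulSeriesTerm a Δ)
  simp only [integral_expSmulSeriesTerm, tsum_expSmulSeriesTerm] at h
  rw [← h.tsum_eq, tsum_const_smul'']

end BanachAlgebra

lemma skew_smul (t : ℝ) (ω : Fin 3 → ℝ) : skew (t • ω) = t • skew ω := by
  ext i j
  fin_cases i <;> fin_cases j <;> simp [skew]

-- The `ℓ∞` operator norm induces the product topology only up to defeq, so the steps matching
-- `integral_exp_smul` and `Gamma` go through `congrArg` and `rfl` rather than `rw`.
attribute [local instance] Matrix.linftyOpNormedRing Matrix.linftyOpNormedAlgebra in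
/-- **Single integral of the SO(3) exponential** (entrywise):
`∫₀^Δ exp_m((t ω)^∧) dt = Γ₁(Δ ω) Δ`. -/
theorem integral_so3_exp (ω : Fin 3 → ℝ) (Δ : ℝ) (i j : Fin 3) :
    (∫ t in (0 : ℝ)..Δ, NormedSpace.exp (skew (t • ω)) i j) =
      (Δ • Gamma 1 (Δ • ω)) i j := by
  let entry : Matrix (Fin 3) (Fin 3) ℝ →L[ℝ] ℝ :=
    LinearMap.toContinuousLinearMap (Matrix.entryLinearMap ℝ ℝ i j)
  simp only [skew_smul]
  calc ∫ t in (0 : ℝ)..Δ, exp (t • skew ω) i j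
      = entry (∫ t in (0 : ℝ)..Δ, exp (t • skew ω)) :=
        entry.intervalIntegral_comp_comm (Continuous.intervalIntegrable (by fun_prop) _ _)
    _ = entry (Δ • ∑' n : ℕ, ((n + 1)! : ℝ)⁻¹ • (Δ • skew ω) ^ n) :=
        congrArg entry (integral_exp_smul _ _)
    _ = (Δ • Gamma 1 (Δ • ω)) i j := by rw [Gamma, skew_smul]; rfl
end
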